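/- Let $V$ be a Hilbert space, $\widetilde{T} \subseteq V$ a closed subspace, $W \subseteq V$ a closed subspace, and $f, u^* \in V$ with $u^* \in \widetilde{T}$ and $f - u^* \in W^\perp$. If $\beta(W^\perp, \widetilde{T}^\perp) := \inf_{w \in W^\perp\setminus\{0\}} \|P_{\widetilde{T}^\perp} w\|/\|w\| > 0$, then $\|f - u^*\|_V \le \beta(W^\perp, \widetilde{T}^\perp)^{-1} \|f - P_{\widetilde{T}} f\|_V$. -/

import Mathlib

/-- The stability constant `β(A,B) = inf_{v ∈ A, v ≠ 0} ‖P_B v‖ / ‖v‖`. -/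
noncomputable def beta {V : Type*} [NormedAddCommGroup V] [InnerProductSpace ℝ V]
    (A B : Submodule ℝ V) [Submodule.HasOrthogonalProjection B] : ℝ :=
  sInf {r : ℝ | ∃ v ∈ A, v ≠ 0 ∧ r = ‖(Submodule.orthogonalProjectionOnto B v : V)‖ / ‖v‖}

section

variable {V : Type*} [NormedAddCommGroup V] [InnerProductSpace ℝ V]

theorem beta_mul_norm_le (A B : Submodule ℝ V) [B.HasOrthogonalProjection] {v : V} (hv : v ∈ A) :
    beta A B * ‖v‖ ≤ ‖(B.orthogonalProjectionOnto v : V)‖ := by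
  rcases eq_or_ne v 0 with rfl | hv0
  · simp
  have hbdd : BddBelow
      {r : ℝ | ∃ v ∈ A, v ≠ 0 ∧ r = ‖(B.orthogonalProjectionOnto v : V)‖ / ‖v‖} := by
    refine ⟨0, ?_⟩
    rintro r ⟨w, -, -, rfl⟩
    positivity
  have hle : beta A B ≤ ‖(B.orthogonalProjectionOnto v : V)‖ / ‖v‖ :=
    csInf_le hbdd ⟨v, hv, hv0, rfl⟩
  exact (le_div_iff₀ (norm_pos_iff.mpr hv0)).mp hle

theorem Submodule.orthogonalProjectionOnto_orthogonal_sub_of_mem (K : Submodule ℝ V)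
    [K.HasOrthogonalProjection] (f : V) {u : V} (hu : u ∈ K) :
    (Kᗮ.orthogonalProjectionOnto (f - u) : V) = f - (K.orthogonalProjectionOnto f : V) := by
  rw [map_sub, K.orthogonalProjectionOnto_orthogonal_apply_eq_zero hu, sub_zero,
    ← Kᗮ.starProjection_apply, K.starProjection_orthogonal_val, K.starProjection_apply]

end

theorem stmt_19_general {V : Type*} [NormedAddCommGroup V] [InnerProductSpace ℝ V]
    (Tt W : Submodule ℝ V) [CompleteSpace Tt]
    (f ustar : V) (hu : ustar ∈ Tt) (horth : f - ustar ∈ Wᗮ)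
    (hβpos : 0 < beta Wᗮ Ttᗮ) :
    ‖f - ustar‖ ≤ (beta Wᗮ Ttᗮ)⁻¹ * ‖f - (Submodule.orthogonalProjectionOnto Tt f : V)‖ := by
  rw [le_inv_mul_iff₀ hβpos, ← Tt.orthogonalProjectionOnto_orthogonal_sub_of_mem f hu]
  exact beta_mul_norm_le Wᗮ Ttᗮ horth

theorem stmt_19 {V : Type*} [NormedAddCommGroup V] [InnerProductSpace ℝ V] [CompleteSpace V]
    (Tt W : Submodule ℝ V) [CompleteSpace Tt] [CompleteSpace W]
    (f ustar : V) (hu : ustar ∈ Tt) (horth : f - ustar ∈ Wᗮ)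
    (hβpos : 0 < beta Wᗮ Ttᗮ) :
    ‖f - ustar‖ ≤ (beta Wᗮ Ttᗮ)⁻¹ * ‖f - (Submodule.orthogonalProjectionOnto Tt f : V)‖ :=
  stmt_19_general Tt W f ustar hu horth hβpos
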